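/- Let L_Hinge: ℝ → ℝ be defined by L_Hinge(b) = max(0, 3/4 − b) + max(0, 1 − b) + max(0, 3/4 + b). Then L_Hinge(b) ≥ 7/4 for all b ∈ ℝ, and L_Hinge(b) = 7/4 if and only if 3/4 ≤ b ≤ 1. In particular, the set of global minimizers of the toy-example hinge loss is exactly the interval [3/4, 1], which is disjoint from the interval (0, 1/4) of thresholds achieving perfect classification. -/
import Mathlib


/-- The toy-example hinge loss. -/
noncomputable def toyHinge (b : ℝ) : ℝ :=
  max 0 (3 / 4 - b) + max 0 (1 - b) + max 0 (3 / 4 + b)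

lemma toyHinge_le : ∀ b : ℝ, 7 / 4 ≤ toyHinge b := by
  intro b
  unfold toyHinge
  rcases le_total b (3/4) with h | h <;> rcases le_total b 1 with h2 | h2 <;>
    rcases le_total b (-(3/4)) with h3 | h3 <;>
    simp [max_def] <;> split_ifs <;> linarith

lemma toyHinge_eq (b : ℝ) : toyHinge b = 7 / 4 ↔ b ∈ Set.Icc (3 / 4 : ℝ) 1 := by
  unfold toyHinge
  simp only [Set.mem_Icc, max_def]
  split_ifs <;> constructor <;> intro h <;> try constructor <;> linarith
  all_goals first | (obtain ⟨h1, h2⟩ := h; linarith) | linarith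

/-- The toy hinge loss is at least `7/4` everywhere, with equality exactly on
`[3/4, 1]`; hence the set of global minimizers is exactly `[3/4, 1]`, which is
disjoint from the interval `(0, 1/4)` of perfect-classification thresholds. -/
theorem toyHinge_minimizers :
    (∀ b : ℝ, 7 / 4 ≤ toyHinge b) ∧
    (∀ b : ℝ, toyHinge b = 7 / 4 ↔ b ∈ Set.Icc (3 / 4 : ℝ) 1) ∧
    {b : ℝ | ∀ x : ℝ, toyHinge b ≤ toyHinge x} = Set.Icc (3 / 4 : ℝ) 1 ∧
    Disjoint (Set.Icc (3 / 4 : ℝ) 1) (Set.Ioo (0 : ℝ) (1 / 4)) := by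
  refine ⟨toyHinge_le, toyHinge_eq, ?_, ?_⟩
  · ext b
    simp only [Set.mem_setOf_eq, ← toyHinge_eq]
    constructor
    · intro h
      have h1 := h (7/8)
      have h2 : toyHinge (7/8) = 7/4 := (toyHinge_eq (7/8)).2 (by norm_num)
      have := toyHinge_le b
      linarith
    · intro h x
      rw [h]
      exact toyHinge_le x
  · rw [Set.disjoint_iff_forall_ne]
    rintro a ⟨ha, _⟩ c ⟨_, hc⟩
    intro h; subst h; linarith
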